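/- Let 1 < p ≤ q < ∞ and let (S_k) be a semi-normalised block-diagonal sequence in K(ℓ_p, ℓ_q). Then (S_k) is equivalent to the unit vector basis of c₀: there is a constant C ≥ 1 such that C⁻¹ max_k |a_k| ≤ ‖Σ_k a_k S_k‖ ≤ C max_k |a_k| for every finitely supported scalar sequence (a_k). -/

import Mathlib

open scoped ENNReal

noncomputable section

lemma memℓp_indicator {p : ℝ≥0∞} [Fact (1 ≤ p)] (s : Set ℕ) (x : lp (fun _ : ℕ => ℝ) p) :
    Memℓp (s.indicator ⇑x) p := by
  have hle : ∀ i, ‖s.indicator ⇑x i‖ ≤ ‖x i‖ := by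
    intro i
    by_cases h : i ∈ s
    · simp [Set.indicator_of_mem h]
    · simp [Set.indicator_of_notMem h]
  rcases eq_or_ne p ∞ with rfl | hp
  · obtain ⟨C, hC⟩ := (lp.memℓp x).bddAbove
    exact memℓp_infty ⟨C, by rintro _ ⟨i, rfl⟩; exact (hle i).trans (hC ⟨i, rfl⟩)⟩
  · have hp0 : 0 < p.toReal :=
      ENNReal.toReal_pos (lt_of_lt_of_le zero_lt_one Fact.out).ne' hp
    apply memℓp_gen
    refine Summable.of_nonneg_of_le (fun i => ?_) (fun i => ?_) ((lp.memℓp x).summable hp0)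
    · positivity
    · exact Real.rpow_le_rpow (norm_nonneg _) (hle i) hp0.le

/-- The coordinate projection onto a set `s` of indices, as a bounded operator on `ℓ^p`.
For `s = Set.Icc m n` this is the basis projection `Q^{(p)}_{[m,n]}`. -/
def lpIndicator (p : ℝ≥0∞) [Fact (1 ≤ p)] (s : Set ℕ) :
    lp (fun _ : ℕ => ℝ) p →L[ℝ] lp (fun _ : ℕ => ℝ) p :=
  LinearMap.mkContinuous
    { toFun := fun x => ⟨s.indicator ⇑x, memℓp_indicator s x⟩
      map_add' := by
        intro x y
        apply lp.ext
        funext i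
        by_cases h : i ∈ s
        · show s.indicator (⇑(x + y)) i = s.indicator (⇑x) i + s.indicator (⇑y) i
          exact congrFun (Set.indicator_add s ⇑x ⇑y) i
        · show s.indicator (⇑(x + y)) i = s.indicator (⇑x) i + s.indicator (⇑y) i
          exact congrFun (Set.indicator_add s ⇑x ⇑y) i
      map_smul' := by
        intro c x
        apply lp.ext
        funext i
        by_cases h : i ∈ s
        · simp [Set.indicator_of_mem h, lp.coeFn_smul]
        · simp [Set.indicator_of_notMem h, lp.coeFn_smul] }
    1
    (by
      intro x
      rw [one_mul]
      have hle : ∀ i, ‖s.indicator ⇑x i‖ ≤ ‖x i‖ := by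
        intro i
        by_cases h : i ∈ s
        · simp [Set.indicator_of_mem h]
        · simp [Set.indicator_of_notMem h]
      rcases eq_or_ne p ∞ with rfl | hp
      · apply lp.norm_le_of_forall_le (norm_nonneg x)
        intro i
        exact (hle i).trans (lp.norm_apply_le_norm ENNReal.top_ne_zero x i)
      · have hp0 : 0 < p.toReal :=
          ENNReal.toReal_pos (lt_of_lt_of_le zero_lt_one Fact.out).ne' hp
        apply lp.norm_le_of_forall_sum_le hp0 (norm_nonneg x)
        intro t
        refine le_trans (Finset.sum_le_sum fun i _ => ?_) (lp.sum_rpow_le_norm_rpow hp0 x t)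
        exact Real.rpow_le_rpow (norm_nonneg _) (hle i) hp0.le)


lemma lpIndicator_apply (p : ℝ≥0∞) [Fact (1 ≤ p)] (s : Set ℕ) (x : lp (fun _ : ℕ => ℝ) p)
    (i : ℕ) : (lpIndicator p s x : ℕ → ℝ) i = s.indicator ⇑x i := rfl

lemma lpIndicator_norm_le (p : ℝ≥0∞) [Fact (1 ≤ p)] (s : Set ℕ) : ‖lpIndicator p s‖ ≤ 1 :=
  LinearMap.mkContinuous_norm_le _ zero_le_one _

lemma norm_lpIndicator_apply_le (p : ℝ≥0∞) [Fact (1 ≤ p)] (s : Set ℕ)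
    (x : lp (fun _ : ℕ => ℝ) p) : ‖lpIndicator p s x‖ ≤ ‖x‖ := by
  calc ‖lpIndicator p s x‖ ≤ ‖lpIndicator p s‖ * ‖x‖ := (lpIndicator p s).le_opNorm x
  _ ≤ 1 * ‖x‖ := by gcongr; exact lpIndicator_norm_le p s
  _ = ‖x‖ := one_mul _

lemma lpIndicator_inter_apply (p : ℝ≥0∞) [Fact (1 ≤ p)] (s t : Set ℕ)
    (x : lp (fun _ : ℕ => ℝ) p) :
    lpIndicator p s (lpIndicator p t x) = lpIndicator p (s ∩ t) x := by
  apply lp.ext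
  have h1 : (lpIndicator p s (lpIndicator p t x) : ℕ → ℝ)
      = s.indicator (t.indicator ⇑x) := rfl
  have h2 : (lpIndicator p (s ∩ t) x : ℕ → ℝ) = (s ∩ t).indicator ⇑x := rfl
  rw [h1, h2, Set.indicator_indicator]

lemma lpIndicator_empty_apply (p : ℝ≥0∞) [Fact (1 ≤ p)] (x : lp (fun _ : ℕ => ℝ) p) :
    lpIndicator p (∅ : Set ℕ) x = 0 := by
  apply lp.ext
  have h1 : (lpIndicator p (∅ : Set ℕ) x : ℕ → ℝ) = Set.indicator ∅ ⇑x := rfl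
  rw [h1, Set.indicator_empty, lp.coeFn_zero]
  rfl

lemma nnreal_sum_rpow_le {ι : Type*} (s : Finset ι) (f : ι → NNReal) {e : ℝ} (he : 1 ≤ e) :
    ∑ i ∈ s, f i ^ e ≤ (∑ i ∈ s, f i) ^ e := by
  classical
  induction s using Finset.induction with
  | empty => simp [NNReal.zero_rpow (by positivity : e ≠ 0)]
  | insert a s' hx ih =>
    rw [Finset.sum_insert hx, Finset.sum_insert hx]
    calc f a ^ e + ∑ i ∈ s', f i ^ e ≤ f a ^ e + (∑ i ∈ s', f i) ^ e := by gcongr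
    _ ≤ (f a + ∑ i ∈ s', f i) ^ e := NNReal.add_rpow_le_rpow_add _ _ he

lemma real_sum_rpow_le {ι : Type*} (s : Finset ι) (f : ι → ℝ) (hf : ∀ i ∈ s, 0 ≤ f i)
    {e : ℝ} (he : 1 ≤ e) : ∑ i ∈ s, f i ^ e ≤ (∑ i ∈ s, f i) ^ e := by
  have key := nnreal_sum_rpow_le s (fun i => (f i).toNNReal) he
  have h1 : ∀ i ∈ s, ((f i).toNNReal : ℝ) = f i := fun i hi => Real.coe_toNNReal _ (hf i hi)
  calc ∑ i ∈ s, f i ^ e = ((∑ i ∈ s, (f i).toNNReal ^ e : NNReal) : ℝ) := by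
        push_cast [NNReal.coe_rpow]
        exact (Finset.sum_congr rfl fun i hi => by rw [h1 i hi]).symm
  _ ≤ (((∑ i ∈ s, (f i).toNNReal) ^ e : NNReal) : ℝ) := by exact_mod_cast key
  _ = (∑ i ∈ s, f i) ^ e := by
        push_cast
        congr 1
        exact Finset.sum_congr rfl fun i hi => h1 i hi

/-- Pointwise coordinates of a finite sum in `lp`. -/
lemma lp_sum_apply {q : ℝ≥0∞} [Fact (1 ≤ q)] (s : Finset ℕ)
    (y : ℕ → lp (fun _ : ℕ => ℝ) q) (i : ℕ) :
    (↑(∑ k ∈ s, y k) : ℕ → ℝ) i = ∑ k ∈ s, (y k : ℕ → ℝ) i := by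
  rw [lp.coeFn_sum]
  simp

/-- The norm of a disjointly supported finite sum in `lp` (finite exponent):
the `q`-th power of the norm is the sum of `q`-th powers. -/
lemma norm_rpow_sum_of_disjoint {q : ℝ≥0∞} [Fact (1 ≤ q)] (hq : 0 < q.toReal)
    (s : Finset ℕ) (A : ℕ → Set ℕ)
    (hA : ∀ j ∈ s, ∀ k ∈ s, j ≠ k → Disjoint (A j) (A k))
    (y : ℕ → lp (fun _ : ℕ => ℝ) q)
    (hy : ∀ k ∈ s, ∀ i, i ∉ A k → (y k : ℕ → ℝ) i = 0) :
    ‖∑ k ∈ s, y k‖ ^ q.toReal = ∑ k ∈ s, ‖y k‖ ^ q.toReal := by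
  classical
  have hpt : ∀ i : ℕ, ‖(↑(∑ k ∈ s, y k) : ℕ → ℝ) i‖ ^ q.toReal
      = ∑ k ∈ s, ‖(y k : ℕ → ℝ) i‖ ^ q.toReal := by
    intro i
    rw [lp_sum_apply]
    by_cases hex : ∃ k₀ ∈ s, i ∈ A k₀
    · obtain ⟨k₀, hk₀s, hk₀⟩ := hex
      have hz : ∀ k ∈ s, k ≠ k₀ → (y k : ℕ → ℝ) i = 0 := fun k hk hne =>
        hy k hk i fun hiA => Set.disjoint_left.mp (hA k hk k₀ hk₀s hne) hiA hk₀
      rw [Finset.sum_eq_single_of_mem k₀ hk₀s (fun k hk hne => hz k hk hne),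
        Finset.sum_eq_single_of_mem k₀ hk₀s
          (fun k hk hne => by rw [hz k hk hne, norm_zero, Real.zero_rpow hq.ne'])]
    · push_neg at hex
      have hz : ∀ k ∈ s, (y k : ℕ → ℝ) i = 0 := fun k hk => hy k hk i (hex k hk)
      rw [Finset.sum_eq_zero hz, Finset.sum_eq_zero
          (fun k hk => by rw [hz k hk, norm_zero, Real.zero_rpow hq.ne']),
        norm_zero, Real.zero_rpow hq.ne']
  calc ‖∑ k ∈ s, y k‖ ^ q.toReal
      = ∑' i, ‖(↑(∑ k ∈ s, y k) : ℕ → ℝ) i‖ ^ q.toReal := lp.norm_rpow_eq_tsum hq _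
  _ = ∑' i, ∑ k ∈ s, ‖(y k : ℕ → ℝ) i‖ ^ q.toReal := tsum_congr hpt
  _ = ∑ k ∈ s, ∑' i, ‖(y k : ℕ → ℝ) i‖ ^ q.toReal :=
      Summable.tsum_finsetSum fun k _ => (lp.memℓp (y k)).summable hq
  _ = ∑ k ∈ s, ‖y k‖ ^ q.toReal :=
      Finset.sum_congr rfl fun k _ => (lp.norm_rpow_eq_tsum hq (y k)).symm

/-- The norm of a sum of disjoint coordinate projections of `x` is at most `‖x‖`. -/
lemma norm_sum_lpIndicator_le {p : ℝ≥0∞} [Fact (1 ≤ p)] (hp : 0 < p.toReal)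
    (s : Finset ℕ) (A : ℕ → Set ℕ)
    (hA : ∀ j ∈ s, ∀ k ∈ s, j ≠ k → Disjoint (A j) (A k))
    (x : lp (fun _ : ℕ => ℝ) p) :
    ‖∑ k ∈ s, lpIndicator p (A k) x‖ ≤ ‖x‖ := by
  classical
  have hle : ∀ i, ‖(↑(∑ k ∈ s, lpIndicator p (A k) x) : ℕ → ℝ) i‖ ≤ ‖x i‖ := by
    intro i
    rw [lp_sum_apply]
    by_cases hex : ∃ k₀ ∈ s, i ∈ A k₀
    · obtain ⟨k₀, hk₀s, hk₀⟩ := hex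
      have hz : ∀ k ∈ s, k ≠ k₀ → (lpIndicator p (A k) x : ℕ → ℝ) i = 0 := fun k hk hne => by
        rw [lpIndicator_apply,
          Set.indicator_of_notMem (fun hiA => Set.disjoint_left.mp (hA k hk k₀ hk₀s hne) hiA hk₀)]
      rw [Finset.sum_eq_single_of_mem k₀ hk₀s (fun k hk hne => hz k hk hne),
        lpIndicator_apply, Set.indicator_of_mem hk₀]
    · push_neg at hex
      have hz : ∀ k ∈ s, (lpIndicator p (A k) x : ℕ → ℝ) i = 0 := fun k hk => by
        rw [lpIndicator_apply, Set.indicator_of_notMem (hex k hk)]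
      rw [Finset.sum_congr rfl hz, Finset.sum_const, smul_zero, norm_zero]
      exact norm_nonneg _
  apply lp.norm_le_of_forall_sum_le hp (norm_nonneg x)
  intro t
  refine le_trans (Finset.sum_le_sum fun i _ => ?_) (lp.sum_rpow_le_norm_rpow hp x t)
  exact Real.rpow_le_rpow (norm_nonneg _) (hle i) hp.le

theorem statement6 (p q : ℝ≥0∞) [Fact (1 ≤ p)] [Fact (1 ≤ q)]
    (hp : 1 < p) (hpq : p ≤ q) (hq : q < ∞)
    (S : ℕ → (lp (fun _ : ℕ => ℝ) p →L[ℝ] lp (fun _ : ℕ => ℝ) q))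
    -- the `S k` are compact operators, i.e. members of `K(ℓ_p, ℓ_q)`
    (hScompact : ∀ k, IsCompactOperator ⇑(S k))
    -- `(S k)` is block-diagonal with blocks `[l k, u k]`, `l k < u k < l (k+1)`
    (l u : ℕ → ℕ) (hlu : ∀ k, l k < u k) (hul : ∀ k, u k < l (k + 1))
    (hblock : ∀ k, S k = (lpIndicator q (Set.Icc (l k) (u k))).comp
      ((S k).comp (lpIndicator p (Set.Icc (l k) (u k)))))
    -- `(S k)` is semi-normalised
    (c : ℝ) (hc : 0 < c) (hcS : ∀ k, c ≤ ‖S k‖)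
    (C₀ : ℝ) (hSC : ∀ k, ‖S k‖ ≤ C₀) :
    -- conclusion: `(S k)` is equivalent to the unit vector basis of `c₀`
    ∃ C : ℝ, 1 ≤ C ∧ ∀ (s : Finset ℕ) (a : ℕ → ℝ),
      C⁻¹ * (⨆ k ∈ s, |a k|) ≤ ‖∑ k ∈ s, a k • S k‖ ∧
      ‖∑ k ∈ s, a k • S k‖ ≤ C * (⨆ k ∈ s, |a k|) := by
  classical
  have hq1 : (1 : ℝ≥0∞) ≤ q := Fact.out
  have hpfin : p ≠ ∞ := (lt_of_le_of_lt hpq hq).ne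
  have hqfin : q ≠ ∞ := hq.ne
  have hr : 0 < p.toReal := ENNReal.toReal_pos (zero_lt_one.trans hp).ne' hpfin
  have ht1 : 1 ≤ q.toReal := by
    rw [← ENNReal.toReal_one]
    exact (ENNReal.toReal_le_toReal (by simp) hqfin).mpr hq1
  have ht : 0 < q.toReal := zero_lt_one.trans_le ht1
  have hrt : p.toReal ≤ q.toReal := (ENNReal.toReal_le_toReal hpfin hqfin).mpr hpq
  have hC₀pos : 0 < C₀ := lt_of_lt_of_le hc ((hcS 0).trans (hSC 0))
  have lmono : StrictMono l := strictMono_nat_of_lt_succ fun k => (hlu k).trans (hul k)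
  have hblk : ∀ {j k : ℕ}, j < k → u j < l k := fun {j k} h =>
    (hul j).trans_le (lmono.monotone (Nat.succ_le_of_lt h))
  have hd : ∀ j k, j < k → Disjoint (Set.Icc (l j) (u j)) (Set.Icc (l k) (u k)) := by
    intro j k h
    exact Set.disjoint_left.mpr fun i hi hi' =>
      absurd ((hi.2.trans_lt (hblk h)).trans_le hi'.1) (lt_irrefl i)
  have hdisj : ∀ j k, j ≠ k → Disjoint (Set.Icc (l j) (u j)) (Set.Icc (l k) (u k)) :=
    fun j k hne => hne.lt_or_gt.elim (hd j k) fun h => (hd k j h).symm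
  set C : ℝ := max 1 (max c⁻¹ C₀) with hCdef
  have hC1 : 1 ≤ C := le_max_left _ _
  have hCpos : 0 < C := zero_lt_one.trans_le hC1
  have hCc : c⁻¹ ≤ C := le_trans (le_max_left _ _) (le_max_right _ _)
  have hCC₀ : C₀ ≤ C := le_trans (le_max_right _ _) (le_max_right _ _)
  refine ⟨C, hC1, fun s a => ?_⟩
  set T := ∑ k ∈ s, a k • S k with hT
  set M := ⨆ k ∈ s, |a k| with hM
  have hBdd : BddAbove (Set.range fun k => ⨆ _ : k ∈ s, |a k|) := by
    refine ⟨∑ j ∈ s, |a j|, ?_⟩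
    rintro _ ⟨k, rfl⟩
    exact Real.iSup_le (fun hk => Finset.single_le_sum (f := fun j => |a j|) (fun j _ => abs_nonneg _) hk)
      (Finset.sum_nonneg fun j _ => abs_nonneg _)
  have hMnn : 0 ≤ M := Real.iSup_nonneg fun k => Real.iSup_nonneg fun _ => abs_nonneg _
  have hMle : ∀ k ∈ s, |a k| ≤ M := by
    intro k hk
    have h1 : |a k| = ⨆ _ : k ∈ s, |a k| := (ciSup_pos (f := fun _ : k ∈ s => |a k|) hk).symm
    rw [h1, hM]
    exact le_ciSup hBdd k
  have happ : ∀ k x, S k x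
      = lpIndicator q (Set.Icc (l k) (u k)) (S k (lpIndicator p (Set.Icc (l k) (u k)) x)) := by
    intro k x
    conv_lhs => rw [hblock k]
    simp only [ContinuousLinearMap.comp_apply]
  have hsupp : ∀ k (x : lp (fun _ : ℕ => ℝ) p) i, i ∉ Set.Icc (l k) (u k) →
      (S k x : ℕ → ℝ) i = 0 := by
    intro k x i hi
    rw [happ k x, lpIndicator_apply, Set.indicator_of_notMem hi]
  have hTapp : ∀ x, T x = ∑ k ∈ s, a k • S k x := by
    intro x
    rw [hT]
    simp [ContinuousLinearMap.sum_apply, ContinuousLinearMap.smul_apply]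
  -- lower bound
  have hlow : ∀ j ∈ s, |a j| * c ≤ ‖T‖ := by
    intro j hj
    have hQT : ∀ x, a j • S j x = lpIndicator q (Set.Icc (l j) (u j))
        (T (lpIndicator p (Set.Icc (l j) (u j)) x)) := by
      intro x
      rw [hTapp (lpIndicator p (Set.Icc (l j) (u j)) x), map_sum]
      have h0 : ∀ b ∈ s, b ≠ j → lpIndicator q (Set.Icc (l j) (u j))
          (a b • S b (lpIndicator p (Set.Icc (l j) (u j)) x)) = 0 := by
        intro b hb hbj
        have hz : S b (lpIndicator p (Set.Icc (l j) (u j)) x) = 0 := by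
          rw [happ b, lpIndicator_inter_apply,
            Set.disjoint_iff_inter_eq_empty.mp (hdisj b j hbj), lpIndicator_empty_apply,
            map_zero, map_zero]
        rw [map_smul, hz, map_zero, smul_zero]
      rw [Finset.sum_eq_single_of_mem j hj h0, map_smul]
      congr 1
      exact happ j x
    have hsm : ‖a j • S j‖ ≤ ‖T‖ := by
      refine ContinuousLinearMap.opNorm_le_bound _ (norm_nonneg T) fun x => ?_
      rw [ContinuousLinearMap.smul_apply]
      rw [hQT x]
      calc ‖lpIndicator q (Set.Icc (l j) (u j))
            (T (lpIndicator p (Set.Icc (l j) (u j)) x))‖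
          ≤ ‖T (lpIndicator p (Set.Icc (l j) (u j)) x)‖ := norm_lpIndicator_apply_le _ _ _
      _ ≤ ‖T‖ * ‖lpIndicator p (Set.Icc (l j) (u j)) x‖ := T.le_opNorm _
      _ ≤ ‖T‖ * ‖x‖ := by
          have := norm_lpIndicator_apply_le p (Set.Icc (l j) (u j)) x
          exact mul_le_mul_of_nonneg_left this (norm_nonneg T)
    calc |a j| * c ≤ |a j| * ‖S j‖ := mul_le_mul_of_nonneg_left (hcS j) (abs_nonneg _)
    _ = ‖a j • S j‖ := by rw [norm_smul (a j) (S j), Real.norm_eq_abs]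
    _ ≤ ‖T‖ := hsm
  have hlowM : M ≤ C * ‖T‖ := by
    refine Real.iSup_le (fun k => Real.iSup_le (fun hk => ?_) (by positivity)) (by positivity)
    have h1 : |a k| ≤ c⁻¹ * ‖T‖ := by
      rw [← div_eq_inv_mul]
      exact (le_div_iff₀ hc).mpr (hlow k hk)
    exact h1.trans (mul_le_mul_of_nonneg_right hCc (norm_nonneg T))
  constructor
  · rw [inv_mul_le_iff₀ hCpos]
    exact hlowM
  -- upper bound
  · have hdisj' : ∀ j ∈ s, ∀ k ∈ s, j ≠ k →
        Disjoint (Set.Icc (l j) (u j)) (Set.Icc (l k) (u k)) :=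
      fun j _ k _ h => hdisj j k h
    have hub : ∀ x, ‖T x‖ ≤ C₀ * M * ‖x‖ := by
      intro x
      have hCM : 0 ≤ C₀ * M := mul_nonneg hC₀pos.le hMnn
      have hy0 : ∀ k ∈ s, ∀ i, i ∉ Set.Icc (l k) (u k) →
          ((a k • S k x : lp (fun _ : ℕ => ℝ) q) : ℕ → ℝ) i = 0 := by
        intro k _ i hi
        rw [lp.coeFn_smul, Pi.smul_apply, smul_eq_mul, hsupp k x i hi, mul_zero]
      have heq : ‖T x‖ ^ q.toReal = ∑ k ∈ s, ‖a k • S k x‖ ^ q.toReal := by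
        rw [hTapp x]
        exact norm_rpow_sum_of_disjoint ht s _ hdisj' _ hy0
      have hterm : ∀ k ∈ s, ‖a k • S k x‖
          ≤ (C₀ * M) * ‖lpIndicator p (Set.Icc (l k) (u k)) x‖ := by
        intro k hk
        rw [norm_smul, Real.norm_eq_abs]
        have h1 : ‖S k x‖ ≤ C₀ * ‖lpIndicator p (Set.Icc (l k) (u k)) x‖ := by
          rw [happ k x]
          calc ‖lpIndicator q (Set.Icc (l k) (u k))
                (S k (lpIndicator p (Set.Icc (l k) (u k)) x))‖
              ≤ ‖S k (lpIndicator p (Set.Icc (l k) (u k)) x)‖ := norm_lpIndicator_apply_le _ _ _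
          _ ≤ ‖S k‖ * ‖lpIndicator p (Set.Icc (l k) (u k)) x‖ := (S k).le_opNorm _
          _ ≤ C₀ * ‖lpIndicator p (Set.Icc (l k) (u k)) x‖ :=
              mul_le_mul_of_nonneg_right (hSC k) (norm_nonneg _)
        calc |a k| * ‖S k x‖
            ≤ M * (C₀ * ‖lpIndicator p (Set.Icc (l k) (u k)) x‖) :=
              mul_le_mul (hMle k hk) h1 (norm_nonneg _) hMnn
        _ = (C₀ * M) * ‖lpIndicator p (Set.Icc (l k) (u k)) x‖ := by ring
      have h2 : ∑ k ∈ s, ‖a k • S k x‖ ^ q.toReal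
          ≤ (C₀ * M) ^ q.toReal *
            ∑ k ∈ s, ‖lpIndicator p (Set.Icc (l k) (u k)) x‖ ^ q.toReal := by
        rw [Finset.mul_sum]
        refine Finset.sum_le_sum fun k hk => ?_
        calc ‖a k • S k x‖ ^ q.toReal
            ≤ ((C₀ * M) * ‖lpIndicator p (Set.Icc (l k) (u k)) x‖) ^ q.toReal :=
              Real.rpow_le_rpow (norm_nonneg _) (hterm k hk) ht.le
        _ = (C₀ * M) ^ q.toReal * ‖lpIndicator p (Set.Icc (l k) (u k)) x‖ ^ q.toReal :=
              Real.mul_rpow hCM (norm_nonneg _)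
      have h3 : ∑ k ∈ s, ‖lpIndicator p (Set.Icc (l k) (u k)) x‖ ^ q.toReal
          ≤ (∑ k ∈ s, ‖lpIndicator p (Set.Icc (l k) (u k)) x‖ ^ p.toReal)
            ^ (q.toReal / p.toReal) := by
        have he : 1 ≤ q.toReal / p.toReal := (one_le_div hr).mpr hrt
        have key := real_sum_rpow_le s
          (fun k => ‖lpIndicator p (Set.Icc (l k) (u k)) x‖ ^ p.toReal)
          (fun k _ => Real.rpow_nonneg (norm_nonneg _) _) he
        calc ∑ k ∈ s, ‖lpIndicator p (Set.Icc (l k) (u k)) x‖ ^ q.toReal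
            = ∑ k ∈ s, (‖lpIndicator p (Set.Icc (l k) (u k)) x‖ ^ p.toReal)
              ^ (q.toReal / p.toReal) := by
              refine Finset.sum_congr rfl fun k _ => ?_
              rw [← Real.rpow_mul (norm_nonneg _)]
              congr 1
              field_simp
        _ ≤ _ := key
      have hP0 : ∀ k ∈ s, ∀ i, i ∉ Set.Icc (l k) (u k) →
          (lpIndicator p (Set.Icc (l k) (u k)) x : ℕ → ℝ) i = 0 := by
        intro k _ i hi
        rw [lpIndicator_apply, Set.indicator_of_notMem hi]
      have h4 : ∑ k ∈ s, ‖lpIndicator p (Set.Icc (l k) (u k)) x‖ ^ p.toReal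
          = ‖∑ k ∈ s, lpIndicator p (Set.Icc (l k) (u k)) x‖ ^ p.toReal :=
        (norm_rpow_sum_of_disjoint hr s _ hdisj' _ hP0).symm
      have h5 : ‖∑ k ∈ s, lpIndicator p (Set.Icc (l k) (u k)) x‖ ≤ ‖x‖ :=
        norm_sum_lpIndicator_le hr s _ hdisj' x
      have h6 : ‖T x‖ ^ q.toReal ≤ ((C₀ * M) * ‖x‖) ^ q.toReal := by
        calc ‖T x‖ ^ q.toReal = ∑ k ∈ s, ‖a k • S k x‖ ^ q.toReal := heq
        _ ≤ (C₀ * M) ^ q.toReal *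
            ∑ k ∈ s, ‖lpIndicator p (Set.Icc (l k) (u k)) x‖ ^ q.toReal := h2
        _ ≤ (C₀ * M) ^ q.toReal *
            ((∑ k ∈ s, ‖lpIndicator p (Set.Icc (l k) (u k)) x‖ ^ p.toReal)
              ^ (q.toReal / p.toReal)) :=
            mul_le_mul_of_nonneg_left h3 (Real.rpow_nonneg hCM _)
        _ = (C₀ * M) ^ q.toReal *
            ((‖∑ k ∈ s, lpIndicator p (Set.Icc (l k) (u k)) x‖ ^ p.toReal)
              ^ (q.toReal / p.toReal)) := by rw [h4]
        _ = (C₀ * M) ^ q.toReal *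
            ‖∑ k ∈ s, lpIndicator p (Set.Icc (l k) (u k)) x‖ ^ q.toReal := by
            rw [← Real.rpow_mul (norm_nonneg _)]
            congr 2
            field_simp
        _ ≤ (C₀ * M) ^ q.toReal * ‖x‖ ^ q.toReal :=
            mul_le_mul_of_nonneg_left (Real.rpow_le_rpow (norm_nonneg _) h5 ht.le)
              (Real.rpow_nonneg hCM _)
        _ = ((C₀ * M) * ‖x‖) ^ q.toReal := (Real.mul_rpow hCM (norm_nonneg _)).symm
      exact (Real.rpow_le_rpow_iff (norm_nonneg _) (mul_nonneg hCM (norm_nonneg _)) ht).mp h6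
    have hTle : ‖T‖ ≤ C₀ * M :=
      ContinuousLinearMap.opNorm_le_bound _ (mul_nonneg hC₀pos.le hMnn) hub
    exact hTle.trans (mul_le_mul_of_nonneg_right hCC₀ hMnn)

end
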